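/- Let σ = 2/n and let Q be the unique positive radially symmetric solution of −(1/2)ΔQ + Q = |Q|^{4/n}Q on ℝⁿ. Then for every ε > 0, the function u^ε(t,x) = (cos t)^{−n/2} Q(x/(ε cos t)) e^{i tan(t)/ε − i|x|² tan(t)/(2ε)} is, for 0 ≤ t < π/2, an exact solution of the focusing L²-critical semi-classical NLS with isotropic harmonic potential iε∂_t u^ε + (ε²/2)Δu^ε = (|x|²/2)u^ε − |u^ε|^{4/n}u^ε, with initial data u^ε(0,x) = Q(x/ε). -/

import Mathlib

open MeasureTheory Filter Complex
open scoped ENNReal Real Topology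

noncomputable section

/-- Euclidean space `ℝⁿ`. -/
abbrev Rn (n : ℕ) := EuclideanSpace ℝ (Fin n)

/-- Partial derivative in the `i`-th coordinate direction of a complex-valued function. -/
def pderivC {n : ℕ} (f : Rn n → ℂ) (i : Fin n) (x : Rn n) : ℂ :=
  fderiv ℝ f x (EuclideanSpace.single i 1)

/-- Partial derivative in the `i`-th coordinate direction of a real-valued function. -/
def pderivR {n : ℕ} (f : Rn n → ℝ) (i : Fin n) (x : Rn n) : ℝ :=
  fderiv ℝ f x (EuclideanSpace.single i 1)

/-- Laplacian of a complex-valued function on `ℝⁿ`. -/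
def laplacianC {n : ℕ} (f : Rn n → ℂ) (x : Rn n) : ℂ :=
  ∑ i, pderivC (pderivC f i) i x

/-- Laplacian of a real-valued function on `ℝⁿ`. -/
def laplacianR {n : ℕ} (f : Rn n → ℝ) (x : Rn n) : ℝ :=
  ∑ i, pderivR (pderivR f i) i x

/-- The gradient of a complex-valued function, as a vector in `EuclideanSpace ℂ (Fin n)`. -/
def gradC {n : ℕ} (f : Rn n → ℂ) (x : Rn n) : EuclideanSpace ℂ (Fin n) :=
  (WithLp.equiv 2 (Fin n → ℂ)).symm (fun i => pderivC f i x)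

/-- A real vector of `ℝⁿ` viewed as a vector of `EuclideanSpace ℂ (Fin n)`. -/
def vecRC {n : ℕ} (w : Rn n) : EuclideanSpace ℂ (Fin n) :=
  (WithLp.equiv 2 (Fin n → ℂ)).symm (fun i => (w i : ℂ))

/-- A complex vector, packaged as an element of `EuclideanSpace ℂ (Fin n)`. -/
def vecC {n : ℕ} (c : Fin n → ℂ) : EuclideanSpace ℂ (Fin n) :=
  (WithLp.equiv 2 (Fin n → ℂ)).symm c

/-- The `H^s(ℝⁿ)` norm, defined via the Fourier transform
`‖f‖_{H^s} = ‖(1+|ξ|²)^{s/2} 𝓕f‖_{L²}`. -/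
def HsNorm {n : ℕ} (s : ℝ) {E : Type*} [NormedAddCommGroup E] [NormedSpace ℂ E]
    (f : Rn n → E) : ℝ≥0∞ :=
  (∫⁻ ξ : Rn n, ENNReal.ofReal ((1 + ‖ξ‖ ^ 2) ^ s * ‖FourierTransform.fourier f ξ‖ ^ 2)) ^ (1 / 2 : ℝ)

/-- A smooth function of `(t,x)` which is sub-quadratic in `x`, locally uniformly in time:
all space derivatives of order at least two are bounded on compact time intervals. -/
def SubquadraticPotential {n : ℕ} (V : ℝ → Rn n → ℝ) : Prop :=
  ContDiff ℝ (⊤ : ℕ∞) (Function.uncurry V) ∧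
  ∀ k : ℕ, 2 ≤ k → ∀ T > (0:ℝ), ∃ C : ℝ, ∀ t ∈ Set.Icc (-T) T, ∀ x : Rn n,
    ‖iteratedFDeriv ℝ k (V t) x‖ ≤ C

/-- A smooth real-valued function on `ℝⁿ` all of whose derivatives of order `≥ 2` are bounded. -/
def SubquadraticPhase {n : ℕ} (φ : Rn n → ℝ) : Prop :=
  ContDiff ℝ (⊤ : ℕ∞) φ ∧
  ∀ k : ℕ, 2 ≤ k → ∃ C : ℝ, ∀ x : Rn n, ‖iteratedFDeriv ℝ k φ x‖ ≤ C

/-- `φ` solves the eikonal equation `∂ₜφ + |∇φ|²/2 + V = 0` on `[0,T] × ℝⁿ` with datum `φ₀`. -/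
def SolvesEikonal {n : ℕ} (V : ℝ → Rn n → ℝ) (φ₀ : Rn n → ℝ) (T : ℝ)
    (φ : ℝ → Rn n → ℝ) : Prop :=
  (∀ x, φ 0 x = φ₀ x) ∧
  ∀ t ∈ Set.Icc (0:ℝ) T, ∀ x : Rn n,
    HasDerivAt (fun s => φ s x) (-(1 / 2) * ‖gradient (φ t) x‖ ^ 2 - V t x) t

/-- Smoothness on the slab `[0,T] × ℝⁿ`. -/
def SmoothOnSlab {n : ℕ} {E : Type*} [NormedAddCommGroup E] [NormedSpace ℝ E]
    (T : ℝ) (u : ℝ → Rn n → E) : Prop :=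
  ContDiffOn ℝ (⊤ : ℕ∞) (Function.uncurry u) (Set.Icc (0:ℝ) T ×ˢ Set.univ)

/-- Membership and continuity in time with values in `H^s(ℝⁿ)`, on `[0,T]`. -/
def ContInHs {n : ℕ} (s T : ℝ) (u : ℝ → Rn n → ℂ) : Prop :=
  (∀ t ∈ Set.Icc (0:ℝ) T, HsNorm s (u t) < ⊤) ∧
  ∀ t₀ ∈ Set.Icc (0:ℝ) T,
    Tendsto (fun t => HsNorm s (fun x => u t x - u t₀ x)) (𝓝[Set.Icc (0:ℝ) T] t₀) (𝓝 0)

/-- `u` solves the semi-classical NLS `iε∂ₜu + (ε²/2)Δu = V u + g(|u|²)u` on `S × ℝⁿ`. -/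
def SolvesNLS {n : ℕ} (ε : ℝ) (V : ℝ → Rn n → ℝ) (g : ℝ → ℝ) (S : Set ℝ)
    (u : ℝ → Rn n → ℂ) : Prop :=
  ∀ t ∈ S, ∀ x : Rn n,
    Complex.I * ε * deriv (fun s => u s x) t + (ε ^ 2 / 2) * laplacianC (u t) x
      = (V t x : ℂ) * u t x + (g (‖u t x‖ ^ 2) : ℂ) * u t x

/-- `Q` is the ground state: the positive, radially symmetric solution of
`-(1/2)ΔQ + Q = |Q|^{2σ}Q` (here with the `L²`-critical power `σ = 2/n`,
i.e. `-(1/2)ΔQ + Q = |Q|^{4/n}Q`). -/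
def IsGroundState {n : ℕ} (σ : ℝ) (Q : Rn n → ℝ) : Prop :=
  ContDiff ℝ (⊤ : ℕ∞) Q ∧ (∀ x, 0 < Q x) ∧
  (∀ x y : Rn n, ‖x‖ = ‖y‖ → Q x = Q y) ∧
  ∀ x : Rn n, -(1 / 2) * laplacianR Q x + Q x = |Q x| ^ (2 * σ) * Q x


namespace CritAux

variable {n : ℕ} {Q : Rn n → ℝ}

/-- The phase exponential. -/
def Efun (β γ : ℝ) (x : Rn n) : ℂ :=
  Complex.exp (Complex.I * (β:ℂ) - Complex.I * ((γ * ‖x‖^2 : ℝ) : ℂ))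

/-- The modulated profile. -/
def Ffun (Q : Rn n → ℝ) (a r β γ : ℝ) (x : Rn n) : ℂ :=
  (a:ℂ) * (Q (r • x) : ℂ) * Efun β γ x

def Gfun (Q : Rn n → ℝ) (a r β γ : ℝ) (i : Fin n) (x : Rn n) : ℂ :=
  ((a * r : ℝ):ℂ) * ((pderivR Q i (r • x) : ℝ):ℂ) * Efun β γ x
    + (-Complex.I * (2*γ)) * ((x i : ℝ):ℂ) * Ffun Q a r β γ x

lemma hasFDerivAt_E (β γ : ℝ) (x : Rn n) :
    HasFDerivAt (Efun β γ)
      ((Efun β γ x * (-Complex.I * (2*γ))) • (Complex.ofRealCLM.comp (innerSL ℝ x))) x := by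
  have h0 : HasFDerivAt (fun y : Rn n => ‖y‖^2)
      ((2:ℕ) • (innerSL ℝ x).comp (ContinuousLinearMap.id ℝ (Rn n))) x :=
    (hasFDerivAt_id x).norm_sq
  have h1 := Complex.ofRealCLM.hasFDerivAt.comp x (h0.const_mul γ)
  have h2 := ((hasFDerivAt_const (Complex.I * (β:ℂ)) x).sub (h1.const_mul Complex.I)).cexp
  refine HasFDerivAt.congr_fderiv (f := Efun β γ) h2 ?_
  · ext v
    simp [Efun]
    ring

lemma hasFDerivAt_F (hQs : ContDiff ℝ (⊤:ℕ∞) Q) (a r β γ : ℝ) (x : Rn n) :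
    HasFDerivAt (Ffun Q a r β γ)
      ((Ffun Q a r β γ x * (-Complex.I * (2*γ))) • (Complex.ofRealCLM.comp (innerSL ℝ x))
        + ((a:ℂ) * Efun β γ x * (r:ℂ)) • (Complex.ofRealCLM.comp (fderiv ℝ Q (r • x)))) x := by
  have hq0 : HasFDerivAt (fun y : Rn n => r • y) (r • ContinuousLinearMap.id ℝ (Rn n)) x :=
    (hasFDerivAt_id x).const_smul r
  have hq1 := HasFDerivAt.comp x ((hQs.differentiable (by norm_num)) (r • x)).hasFDerivAt hq0
  have hq2 := (Complex.ofRealCLM.hasFDerivAt.comp x hq1).const_mul (a:ℂ)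
  have hF := hq2.mul (hasFDerivAt_E β γ x)
  refine HasFDerivAt.congr_fderiv (f := Ffun Q a r β γ) hF ?_
  ext v
  simp [Ffun, mul_comm]
  ring

lemma pderiv_F (hQs : ContDiff ℝ (⊤:ℕ∞) Q) (a r β γ : ℝ) (i : Fin n) (x : Rn n) :
    pderivC (Ffun Q a r β γ) i x = Gfun Q a r β γ i x := by
  rw [pderivC, (hasFDerivAt_F hQs a r β γ x).fderiv]
  simp [Gfun, Ffun, EuclideanSpace.inner_single_right, real_inner_comm]
  rw [show pderivR Q i (r • x) = fderiv ℝ Q (r • x) (EuclideanSpace.single i 1) from rfl]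
  push_cast
  ring

lemma contDiff_pderivR (hQs : ContDiff ℝ (⊤:ℕ∞) Q) (i : Fin n) :
    ContDiff ℝ (⊤:ℕ∞) (pderivR Q i) := by
  exact (hQs.fderiv_right (by simp)).clm_apply contDiff_const

lemma pderiv_G (hQs : ContDiff ℝ (⊤:ℕ∞) Q) (a r β γ : ℝ) (i : Fin n) (x : Rn n) :
    pderivC (Gfun Q a r β γ i) i x =
      ((a * r^2 * pderivR (pderivR Q i) i (r • x) : ℝ):ℂ) * Efun β γ x
      + ((a * r * pderivR Q i (r • x) : ℝ):ℂ) * (-Complex.I * (2*γ)) * ((x i : ℝ):ℂ) * Efun β γ x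
      + (-Complex.I * (2*γ)) * (Ffun Q a r β γ x + ((x i : ℝ):ℂ) * Gfun Q a r β γ i x) := by
  have hq0 : HasFDerivAt (fun y : Rn n => r • y) (r • ContinuousLinearMap.id ℝ (Rn n)) x :=
    (hasFDerivAt_id x).const_smul r
  have hp1 := HasFDerivAt.comp x
    (((contDiff_pderivR hQs i).differentiable (by norm_num)) (r • x)).hasFDerivAt hq0
  have hp2 := (Complex.ofRealCLM.hasFDerivAt.comp x hp1).const_mul ((a*r : ℝ):ℂ)
  have hterm1 := hp2.mul (hasFDerivAt_E β γ x)
  have hco : HasFDerivAt (fun y : Rn n => ((y i : ℝ):ℂ))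
      (Complex.ofRealCLM.comp (EuclideanSpace.proj i)) x :=
    (Complex.ofRealCLM.comp (EuclideanSpace.proj (𝕜 := ℝ) i)).hasFDerivAt
  have hterm2 := (hco.const_mul (-Complex.I * (2*γ))).mul (hasFDerivAt_F hQs a r β γ x)
  rw [pderivC, HasFDerivAt.fderiv (f := Gfun Q a r β γ i) (hterm1.add hterm2)]
  have e1 : (fderiv ℝ (pderivR Q i) (r • x)) (EuclideanSpace.single i 1)
      = pderivR (pderivR Q i) i (r • x) := rfl
  have e2 : (fderiv ℝ Q (r • x)) (EuclideanSpace.single i 1) = pderivR Q i (r • x) := rfl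
  simp [Gfun, Ffun, EuclideanSpace.inner_single_right, real_inner_comm, e1, e2,
    EuclideanSpace.single_apply]
  ring

lemma clm_apply_eq_sum (L : Rn n →L[ℝ] ℝ) (x : Rn n) :
    L x = ∑ i, x i * L (EuclideanSpace.single i 1) := by
  have hs : ∑ i, x i • EuclideanSpace.single i (1:ℝ) = x := by
    ext j
    rw [WithLp.ofLp_sum, Finset.sum_apply]
    simp [EuclideanSpace.single_apply]
  conv_lhs => rw [← hs]
  rw [map_sum]
  simp [smul_eq_mul]

lemma norm_sq_eq_sum (x : Rn n) : ‖x‖^2 = ∑ i, x i ^ 2 := by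
  rw [EuclideanSpace.norm_eq, Real.sq_sqrt]
  · simp [sq_abs]
  · positivity

lemma laplacian_F (hQs : ContDiff ℝ (⊤:ℕ∞) Q) (a r β γ : ℝ) (x : Rn n) :
    laplacianC (Ffun Q a r β γ) x =
      ((a * r^2 * laplacianR Q (r • x) : ℝ):ℂ) * Efun β γ x
      + 2 * (-Complex.I * (2*γ)) * ((a * r : ℝ):ℂ) * (((fderiv ℝ Q (r • x)) x : ℝ):ℂ) * Efun β γ x
      + (-Complex.I * (2*γ)) * (n:ℂ) * Ffun Q a r β γ x
      + (-Complex.I * (2*γ))^2 * ((‖x‖^2 : ℝ):ℂ) * Ffun Q a r β γ x := by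
  rw [laplacianC]
  have expand : ∀ i, pderivC (pderivC (Ffun Q a r β γ) i) i x =
      ((a*r^2 : ℝ):ℂ) * ((pderivR (pderivR Q i) i (r • x) : ℝ):ℂ) * Efun β γ x
      + 2 * (-Complex.I * (2*γ)) * ((a*r : ℝ):ℂ) * ((x i * pderivR Q i (r • x) : ℝ):ℂ) * Efun β γ x
      + (-Complex.I * (2*γ)) * Ffun Q a r β γ x
      + (-Complex.I * (2*γ))^2 * ((x i ^ 2 : ℝ):ℂ) * Ffun Q a r β γ x := by
    intro i
    have hfx : pderivC (Ffun Q a r β γ) i = Gfun Q a r β γ i :=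
      funext (pderiv_F hQs a r β γ i)
    rw [hfx, pderiv_G hQs a r β γ i x, Gfun]
    push_cast
    ring
  simp only [expand]
  rw [Finset.sum_add_distrib, Finset.sum_add_distrib, Finset.sum_add_distrib]
  have h1 : ∑ i, ((a*r^2 : ℝ):ℂ) * ((pderivR (pderivR Q i) i (r • x) : ℝ):ℂ) * Efun β γ x
      = ((a * r^2 * laplacianR Q (r • x) : ℝ):ℂ) * Efun β γ x := by
    rw [← Finset.sum_mul, ← Finset.mul_sum, ← Complex.ofReal_sum]
    push_cast [laplacianR]
    ring
  have h2 : ∑ i, (2 * (-Complex.I * (2*γ)) * ((a*r : ℝ):ℂ) * ((x i * pderivR Q i (r • x) : ℝ):ℂ) * Efun β γ x)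
      = 2 * (-Complex.I * (2*γ)) * ((a * r : ℝ):ℂ) * (((fderiv ℝ Q (r • x)) x : ℝ):ℂ) * Efun β γ x := by
    rw [clm_apply_eq_sum (fderiv ℝ Q (r • x)) x]
    simp only [show ∀ i, (fderiv ℝ Q (r • x)) (EuclideanSpace.single i 1) = pderivR Q i (r • x) from fun _ => rfl]
    rw [Complex.ofReal_sum, Finset.mul_sum, ← Finset.sum_mul]
  have h3 : ∑ _i : Fin n, (-Complex.I * (2*γ)) * Ffun Q a r β γ x
      = (-Complex.I * (2*γ)) * (n:ℂ) * Ffun Q a r β γ x := by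
    rw [Finset.sum_const, Finset.card_univ, Fintype.card_fin]
    simp [nsmul_eq_mul]; ring
  have h4 : ∑ i, (-Complex.I * (2*γ))^2 * ((x i ^ 2 : ℝ):ℂ) * Ffun Q a r β γ x
      = (-Complex.I * (2*γ))^2 * ((‖x‖^2 : ℝ):ℂ) * Ffun Q a r β γ x := by
    rw [norm_sq_eq_sum, Complex.ofReal_sum, ← Finset.sum_mul, ← Finset.mul_sum]
  rw [h1, h2, h3, h4]

lemma hasDerivAt_u (hQs : ContDiff ℝ (⊤:ℕ∞) Q) (ε : ℝ) (hε : ε ≠ 0) (x : Rn n)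
    (t : ℝ) (hc : 0 < Real.cos t) :
    HasDerivAt (fun s =>
        (((Real.cos s) ^ (-(n : ℝ) / 2) : ℝ) : ℂ)
          * ((Q ((ε * Real.cos s)⁻¹ • x) : ℝ) : ℂ)
          * Complex.exp (Complex.I * ((Real.tan s / ε : ℝ) : ℂ)
              - Complex.I * ((‖x‖ ^ 2 * Real.tan s / (2 * ε) : ℝ) : ℂ)))
      ( ( ((-(n:ℝ)/2 * Real.cos t ^ (-(n:ℝ)/2 - 1) * (-Real.sin t) : ℝ) : ℂ)
            * ((Q ((ε * Real.cos t)⁻¹ • x) : ℝ) : ℂ)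
          + (((Real.cos t) ^ (-(n : ℝ) / 2) : ℝ) : ℂ)
            * (((fderiv ℝ Q ((ε * Real.cos t)⁻¹ • x)) ((ε * Real.sin t / (ε * Real.cos t)^2) • x) : ℝ) : ℂ)
          + (((Real.cos t) ^ (-(n : ℝ) / 2) : ℝ) : ℂ) * ((Q ((ε * Real.cos t)⁻¹ • x) : ℝ) : ℂ)
            * (Complex.I * ((1 / Real.cos t ^ 2 / ε : ℝ) : ℂ)
               - Complex.I * ((‖x‖ ^ 2 * (1 / Real.cos t ^ 2) / (2 * ε) : ℝ) : ℂ)) )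
        * Complex.exp (Complex.I * ((Real.tan t / ε : ℝ) : ℂ)
              - Complex.I * ((‖x‖ ^ 2 * Real.tan t / (2 * ε) : ℝ) : ℂ)) ) t := by
  have hA : HasDerivAt (fun s => Real.cos s ^ (-(n:ℝ)/2))
      (-(n:ℝ)/2 * Real.cos t ^ (-(n:ℝ)/2 - 1) * (-Real.sin t)) t := by
    have := (Real.hasDerivAt_cos t).rpow_const (p := -(n:ℝ)/2) (Or.inl hc.ne')
    convert this using 1
    ring
  have hm0 : HasDerivAt (fun s => ε * Real.cos s) (ε * (-Real.sin t)) t :=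
    (Real.hasDerivAt_cos t).const_mul ε
  have hm : HasDerivAt (fun s => (ε * Real.cos s)⁻¹)
      (ε * Real.sin t / (ε * Real.cos t)^2) t := by
    have := hm0.inv (by positivity)
    refine this.congr_deriv ?_
    ring
  have hQC : HasDerivAt (fun s => Q ((ε * Real.cos s)⁻¹ • x))
      ((fderiv ℝ Q ((ε * Real.cos t)⁻¹ • x)) ((ε * Real.sin t / (ε * Real.cos t)^2) • x)) t :=
    ((hQs.differentiable (by norm_num)) _).hasFDerivAt.comp_hasDerivAt t (hm.smul_const x)
  have htan : HasDerivAt Real.tan (1 / Real.cos t ^ 2) t := Real.hasDerivAt_tan hc.ne'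
  have hph1 : HasDerivAt (fun s => Real.tan s / ε) (1 / Real.cos t ^ 2 / ε) t := htan.div_const ε
  have hph2 : HasDerivAt (fun s => ‖x‖ ^ 2 * Real.tan s / (2 * ε))
      (‖x‖ ^ 2 * (1 / Real.cos t ^ 2) / (2 * ε)) t := by
    simpa [mul_div_assoc] using (htan.const_mul (‖x‖^2)).div_const (2*ε)
  have hph : HasDerivAt (fun s => Complex.I * ((Real.tan s / ε : ℝ) : ℂ)
      - Complex.I * ((‖x‖ ^ 2 * Real.tan s / (2 * ε) : ℝ) : ℂ))
      (Complex.I * ((1 / Real.cos t ^ 2 / ε : ℝ) : ℂ)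
        - Complex.I * ((‖x‖ ^ 2 * (1 / Real.cos t ^ 2) / (2 * ε) : ℝ) : ℂ)) t :=
    (hph1.ofReal_comp.const_mul Complex.I).sub (hph2.ofReal_comp.const_mul Complex.I)
  have hE := hph.cexp
  have := ((hA.ofReal_comp.mul hQC.ofReal_comp).mul hE)
  refine this.congr_deriv ?_
  simp only [Pi.mul_apply]
  ring

end CritAux

/-- explicit modulated solution at the `L²`-critical power:
for every `ε > 0`, `u^ε(t,x) = (cos t)^{-n/2} Q(x/(ε cos t)) e^{i tan t/ε - i|x|²tan t/(2ε)}`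
is an exact solution, on `0 ≤ t < π/2`, of the focusing `L²`-critical semi-classical NLS
with isotropic harmonic potential
`iε∂ₜu + (ε²/2)Δu = (|x|²/2)u - |u|^{4/n}u`, with data `u^ε(0,x) = Q(x/ε)`. -/
theorem critical_explicit_solution {n : ℕ} (hn : 1 ≤ n)
    (Q : Rn n → ℝ) (hQ : IsGroundState (2 / (n : ℝ)) Q)
    (ε : ℝ) (hε : 0 < ε) :
    (∀ x : Rn n,
      (fun t (x : Rn n) =>
          (((Real.cos t) ^ (-(n : ℝ) / 2) : ℝ) : ℂ)
            * ((Q ((ε * Real.cos t)⁻¹ • x) : ℝ) : ℂ)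
            * Complex.exp (Complex.I * ((Real.tan t / ε : ℝ) : ℂ)
                - Complex.I * ((‖x‖ ^ 2 * Real.tan t / (2 * ε) : ℝ) : ℂ)))
        0 x = ((Q (ε⁻¹ • x) : ℝ) : ℂ)) ∧
    SolvesNLS ε (fun _ x => ‖x‖ ^ 2 / 2) (fun y => -(y ^ (2 / (n : ℝ))))
      (Set.Ico 0 (Real.pi / 2))
      (fun t x =>
        (((Real.cos t) ^ (-(n : ℝ) / 2) : ℝ) : ℂ)
          * ((Q ((ε * Real.cos t)⁻¹ • x) : ℝ) : ℂ)
          * Complex.exp (Complex.I * ((Real.tan t / ε : ℝ) : ℂ)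
              - Complex.I * ((‖x‖ ^ 2 * Real.tan t / (2 * ε) : ℝ) : ℂ))) := by
  classical
  obtain ⟨hQsmooth, hQpos, _hQrad, hQeq⟩ := hQ
  have hnR : (n:ℝ) ≠ 0 := Nat.cast_ne_zero.mpr (by omega)
  constructor
  · intro x
    simp [Real.tan_zero, Real.one_rpow]
  · unfold SolvesNLS
    intro t ht x
    simp only []
    obtain ⟨ht0, htl⟩ := ht
    have hc : 0 < Real.cos t := Real.cos_pos_of_mem_Ioo
      ⟨by linarith [Real.pi_pos], htl⟩
    set c := Real.cos t with hc_def
    set s0 := Real.sin t with hs0_def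
    set a := c ^ (-(n:ℝ)/2) with ha_def
    have ha : 0 < a := Real.rpow_pos_of_pos hc _
    set r := (ε * c)⁻¹ with hr_def
    set β := Real.tan t / ε with hβ_def
    set γ := Real.tan t / (2*ε) with hγ_def
    have htan : Real.tan t = s0 / c := Real.tan_eq_sin_div_cos t
    -- rewrite the exponential in terms of Efun
    have hE_eq : Complex.exp (Complex.I * ((Real.tan t / ε : ℝ) : ℂ)
        - Complex.I * ((‖x‖ ^ 2 * Real.tan t / (2 * ε) : ℝ) : ℂ)) = CritAux.Efun β γ x := by
      have h1 : (‖x‖ ^ 2 * Real.tan t / (2 * ε) : ℝ) = γ * ‖x‖ ^ 2 := by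
        rw [hγ_def]; ring
      rw [CritAux.Efun, h1]
    have hlam_eq : (fun z : Rn n =>
        ((a : ℝ) : ℂ) * ((Q (r • z) : ℝ) : ℂ)
          * Complex.exp (Complex.I * ((Real.tan t / ε : ℝ) : ℂ)
              - Complex.I * ((‖z‖ ^ 2 * Real.tan t / (2 * ε) : ℝ) : ℂ)))
        = CritAux.Ffun Q a r β γ := by
      funext z
      have h1 : (‖z‖ ^ 2 * Real.tan t / (2 * ε) : ℝ) = γ * ‖z‖ ^ 2 := by
        rw [hγ_def]; ring
      rw [CritAux.Ffun, CritAux.Efun, h1, hβ_def]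
    rw [hE_eq, hlam_eq, CritAux.laplacian_F hQsmooth a r β γ x,
      (CritAux.hasDerivAt_u hQsmooth ε hε.ne' x t hc).deriv]
    rw [hE_eq]
    rw [← hc_def, ← hs0_def, ← hr_def, ← ha_def]
    set P := Q (r • x) with hP_def
    have hQy : 0 < P := hQpos _
    set K := P ^ ((4:ℝ)/n) with hK_def
    have hK : 0 < K := Real.rpow_pos_of_pos hQy _
    have hW : (fderiv ℝ Q (r • x)) ((ε * s0 / (ε * c) ^ 2) • x)
        = (s0 * ε * r^2) * ((fderiv ℝ Q (r • x)) x) := by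
      rw [_root_.map_smul, show (ε * s0 / (ε * c) ^ 2) = s0 * ε * r^2 by
        rw [hr_def]; field_simp]
      rfl
    have hnorm : ‖(a : ℂ) * (P : ℂ) * CritAux.Efun β γ x‖ ^ 2 = (a * P)^2 := by
      rw [CritAux.Efun]
      simp [map_mul, Complex.norm_exp, mul_pow,
        _root_.sq_abs, ← Complex.ofReal_pow]
    have ha2 : a^2 = c ^ (-(n:ℝ)) := by
      rw [ha_def, ← Real.rpow_natCast (c ^ (-(n:ℝ)/2)) 2, ← Real.rpow_mul hc.le]
      congr 1
      push_cast
      ring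
    have ha3 : (c ^ (-(n:ℝ))) ^ ((2:ℝ)/n) = ε^2 * r^2 := by
      rw [← Real.rpow_mul hc.le, show (-(n:ℝ)) * (2/(n:ℝ)) = -2 by field_simp]
      have h2 : c ^ (-2:ℝ) = (c^2)⁻¹ := by
        rw [Real.rpow_neg hc.le, show (2:ℝ) = ((2:ℕ):ℝ) by norm_num, Real.rpow_natCast]
      rw [h2, hr_def]
      field_simp
    have hq4 : (P^2) ^ ((2:ℝ)/n) = K := by
      rw [hK_def, ← Real.rpow_natCast P 2, ← Real.rpow_mul hQy.le]
      congr 1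
      push_cast
      ring
    have hnl : ((a * P)^2) ^ ((2:ℝ)/n) = ε^2 * r^2 * K := by
      rw [mul_pow, Real.mul_rpow (by positivity) (by positivity), ha2, ha3, hq4]
    have hlap : laplacianR Q (r • x) = 2*P - 2*K*P := by
      have h0 := hQeq (r • x)
      rw [← hP_def, abs_of_pos hQy, show (2 * (2/(n:ℝ))) = 4/n by ring, ← hK_def] at h0
      linarith
    have hac : c ^ (-(n:ℝ)/2 - 1) = a * (ε * r) := by
      rw [hr_def, ha_def, Real.rpow_sub hc, Real.rpow_one]
      field_simp
    have h61 : 1/c^2/ε = ε * r^2 := by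
      rw [hr_def]; field_simp
    have h62 : ‖x‖^2 * (1/c^2) / (2*ε) = ‖x‖^2 * (ε * r^2) / 2 := by
      rw [hr_def]; field_simp
    rw [hnorm, hnl, hlap, hW, hac, h61, h62]
    simp only [CritAux.Ffun]
    rw [← hP_def]
    set W := (fderiv ℝ Q (r • x)) x with hW_def
    set E := CritAux.Efun β γ x with hE_def
    have hsc : s0^2 = 1 - c^2 := by
      have h := Real.sin_sq_add_cos_sq t
      rw [← hs0_def, ← hc_def] at h
      linarith
    have hscC : (s0:ℂ)^2 = 1 - (c:ℂ)^2 := by exact_mod_cast congrArg (Complex.ofReal) hsc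
    have hI2 : Complex.I^2 = -1 := Complex.I_sq
    have hrrC : (r:ℂ) * ((ε:ℂ) * (c:ℂ)) = 1 := by
      have : r * (ε * c) = 1 := by rw [hr_def]; field_simp
      exact_mod_cast congrArg (Complex.ofReal) this
    have hγrC : (2:ℂ) * (γ:ℂ) = (s0:ℂ) * (r:ℂ) := by
      have : 2 * γ = s0 * r := by
        rw [hγ_def, htan, hr_def]; field_simp
      exact_mod_cast congrArg (Complex.ofReal) this
    push_cast
    set X : ℂ := ((‖x‖:ℝ):ℂ)^2 with hX_def
    linear_combination
      ((a:ℂ)*(P:ℂ)*(ε:ℂ)^2*(r:ℂ)^2*E - (a:ℂ)*(P:ℂ)*X*(ε:ℂ)^2*(r:ℂ)^2*E/2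
          + 2*(γ:ℂ)^2*(ε:ℂ)^2*X*(a:ℂ)*(P:ℂ)*E) * hI2
      + ((X*(a:ℂ)*(P:ℂ)*E/2)*((ε:ℂ)*(r:ℂ)*(c:ℂ)+1)) * hrrC
      + (-(X*(a:ℂ)*(P:ℂ)*E*(ε:ℂ)^2*(r:ℂ)^2/2)) * hscC
      + (-(Complex.I*(n:ℂ)*(ε:ℂ)^2*(a:ℂ)*(P:ℂ)*E/2)
          - Complex.I*(a:ℂ)*(ε:ℂ)^2*(r:ℂ)*(W:ℂ)*E
          - X*(a:ℂ)*(P:ℂ)*E*(ε:ℂ)^2*(2*(γ:ℂ)+(s0:ℂ)*(r:ℂ))/2) * hγrC
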